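/- arXiv:2010.11808 — 4 statements merged into one kernel-verified Lean document; each statement's English description precedes it below -/
import Mathlib

section
/- With the same notation, if moreover ‖Av‖ ≥ c‖v‖ for some c > 0 (i.e. the one-step lower bound on the cocycle), then S(Av)/S(v) > c/√(1+e^{2χ}). In particular e^{-χ} > S(Av)/S(v) > c(1+e^{2χ})^{-1/2}. -/
/-- The stable Lyapunov norm `S(v) = √(2 ∑_{n≥0} e^{2nχ} ‖Aⁿ v‖²)`. -/
noncomputable def lyapS {E : Type*} [NormedAddCommGroup E] [NormedSpace ℝ E]
    (χ : ℝ) (A : Module.End ℝ E) (v : E) : ℝ :=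
  Real.sqrt (2 * ∑' n : ℕ, Real.exp (2 * (n : ℝ) * χ) * ‖(A ^ n) v‖ ^ 2)

/-- If in addition `‖A v‖ ≥ c ‖v‖` with `0 < c < 1`, then
`c (1+e^{2χ})^{-1/2} < S(Av)/S(v) < e^{-χ}`. -/
theorem stmt3 {E : Type*} [NormedAddCommGroup E] [NormedSpace ℝ E]
    (χ : ℝ) (hχ : 0 < χ) (A : Module.End ℝ E) (v : E) (hv : v ≠ 0)
    (hsum : Summable fun n : ℕ => Real.exp (2 * (n : ℝ) * χ) * ‖(A ^ n) v‖ ^ 2)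
    (c : ℝ) (hc0 : 0 < c) (hc1 : c < 1) (hAv : c * ‖v‖ ≤ ‖A v‖) :
    c / Real.sqrt (1 + Real.exp (2 * χ)) < lyapS χ A (A v) / lyapS χ A v ∧
    lyapS χ A (A v) / lyapS χ A v < Real.exp (-χ) := by
  set f : ℕ → ℝ := fun n => Real.exp (2 * (n : ℝ) * χ) * ‖(A ^ n) v‖ ^ 2 with hf
  set T : ℝ := ∑' n, f n with hT
  set Ex : ℝ := Real.exp (2 * χ) with hEx
  have hE : 0 < Ex := Real.exp_pos _
  have hf0 : f 0 = ‖v‖ ^ 2 := by simp [hf]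
  have hf1 : Real.exp (2 * χ) * ‖A v‖ ^ 2 = f 1 := by
    simp [hf]
  have hfn : ∀ n, 0 ≤ f n := fun n => mul_nonneg (Real.exp_pos _).le (sq_nonneg _)
  have hV : 0 < ‖v‖ ^ 2 := pow_pos (norm_pos_iff.mpr hv) 2
  have hAv2 : Ex * (c ^ 2 * ‖v‖ ^ 2) ≤ f 1 := by
    rw [← hf1, hEx]
    have : c ^ 2 * ‖v‖ ^ 2 ≤ ‖A v‖ ^ 2 := by
      have h := pow_le_pow_left₀ (by positivity) hAv 2
      calc c ^ 2 * ‖v‖ ^ 2 = (c * ‖v‖) ^ 2 := by ring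
        _ ≤ ‖A v‖ ^ 2 := h
    nlinarith [hE]
  have hshift : Summable (fun n => f (n + 1)) := (summable_nat_add_iff 1).2 hsum
  have hTsplit : T = f 0 + ∑' n, f (n + 1) := Summable.tsum_eq_zero_add hsum
  have hf1le : f 1 ≤ ∑' n, f (n + 1) := by
    have := Summable.le_tsum hshift 0 (fun j _ => hfn _)
    simpa using this
  have hT2 : f 0 + f 1 ≤ T := by rw [hTsplit]; linarith
  -- the shifted sum
  have hSAv : lyapS χ A (A v) =
      Real.sqrt (2 * (Ex⁻¹ * (T - ‖v‖ ^ 2))) := by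
    unfold lyapS
    congr 2
    have hgf : ∀ n : ℕ, Real.exp (2 * (n : ℝ) * χ) * ‖(A ^ n) (A v)‖ ^ 2
        = Ex⁻¹ * f (n + 1) := by
      intro n
      have h1 : (A ^ n) (A v) = (A ^ (n + 1)) v := by
        rw [pow_succ, Module.End.mul_apply]
      have h2 : Real.exp (2 * (n : ℝ) * χ)
          = Ex⁻¹ * Real.exp (2 * ((n : ℕ) + 1 : ℝ) * χ) := by
        rw [hEx, ← Real.exp_neg, ← Real.exp_add]
        ring_nf
      rw [h1, hf]
      simp only [Nat.cast_add, Nat.cast_one] at h2 ⊢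
      rw [h2]
      push_cast
      ring
    calc (∑' n : ℕ, Real.exp (2 * (n : ℝ) * χ) * ‖(A ^ n) (A v)‖ ^ 2)
        = ∑' n : ℕ, Ex⁻¹ * f (n + 1) := by exact tsum_congr hgf
      _ = Ex⁻¹ * ∑' n, f (n + 1) := tsum_mul_left
      _ = Ex⁻¹ * (T - ‖v‖ ^ 2) := by rw [hTsplit, hf0]; ring
  have hSv : lyapS χ A v = Real.sqrt (2 * T) := rfl
  set D : ℝ := T - ‖v‖ ^ 2 with hD
  have hDge : Ex * (c ^ 2 * ‖v‖ ^ 2) ≤ D := by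
    have := hT2; rw [hf0] at this; rw [hD]; linarith [hAv2]
  have hDpos : 0 < D := lt_of_lt_of_le (by positivity) hDge
  have hTpos : 0 < T := by rw [hD] at hDpos; nlinarith
  have hSvpos : 0 < lyapS χ A v := by
    rw [hSv]; exact Real.sqrt_pos.2 (by linarith)
  constructor
  · -- lower bound
    rw [lt_div_iff₀ hSvpos]
    set s : ℝ := 1 + Ex with hs
    have hspos : 0 < s := by positivity
    have hL : 0 ≤ c / Real.sqrt s * lyapS χ A v := by positivity
    rw [hSAv]
    rw [show c / Real.sqrt s * lyapS χ A v < Real.sqrt (2 * (Ex⁻¹ * D)) ↔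
        (c / Real.sqrt s * lyapS χ A v) ^ 2 < 2 * (Ex⁻¹ * D) from
      Real.lt_sqrt hL]
    have hsq : (c / Real.sqrt s * lyapS χ A v) ^ 2 = c ^ 2 / s * (2 * T) := by
      rw [hSv, mul_pow, div_pow, Real.sq_sqrt hspos.le, Real.sq_sqrt (by linarith : (0:ℝ) ≤ 2 * T)]
    rw [hsq, div_mul_eq_mul_div, div_lt_iff₀ hspos]
    have hEinv : Ex⁻¹ * Ex = 1 := inv_mul_cancel₀ hE.ne'
    -- multiply target by Ex
    rw [show (2 : ℝ) * (Ex⁻¹ * D) * s = (2 * D * s) * Ex⁻¹ by ring]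
    rw [show c ^ 2 * (2 * T) = (c ^ 2 * (2 * T) * Ex) * Ex⁻¹ by
      field_simp]
    have hkey : c ^ 2 * (2 * T) * Ex < 2 * D * s := by
      have hTD : T = ‖v‖ ^ 2 + D := by rw [hD]; ring
      rw [hTD, hs]
      have h1c : 0 < 1 - c ^ 2 := by nlinarith
      nlinarith [mul_pos (mul_pos h1c hE) hDpos, mul_pos hE hDpos, hDge]
    exact mul_lt_mul_of_pos_right hkey (by positivity)
  · -- upper bound
    rw [div_lt_iff₀ hSvpos, hSAv, hSv]
    have h1 : Real.sqrt (Real.exp (-χ) ^ 2 * (2 * T)) = Real.exp (-χ) * Real.sqrt (2 * T) := by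
      rw [Real.sqrt_mul (sq_nonneg _), Real.sqrt_sq (Real.exp_pos _).le]
    rw [← h1]
    apply Real.sqrt_lt_sqrt (by positivity)
    have h2 : Real.exp (-χ) ^ 2 = Ex⁻¹ := by
      rw [hEx, ← Real.exp_neg, ← Real.exp_nat_mul]
      norm_num
    rw [h2]
    have : D < T := by rw [hD]; linarith
    have hEinv : 0 < Ex⁻¹ := by positivity
    have h3 : Ex⁻¹ * D < Ex⁻¹ * T := mul_lt_mul_of_pos_left this hEinv
    linarith
end

section
/- In the setting of the previous statement, the intersection point w = w(V^s, V^u) is a Lipschitz function of the pair of graphs: if G₁, G₂ and J₁, J₂ are two pairs of representing functions with Lip(Gᵢ), Lip(Jᵢ) < ε, and w₁, w₂ are the respective intersection points, then ‖w₁ - w₂‖ ≤ 2(‖G₁-G₂‖_{C^0} + ‖J₁-J₂‖_{C^0})/(1-ε²). -/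
/-- Lipschitz dependence of the intersection point on the pair of graphs: if `w₁, w₂`
are intersection points of the graphs of `(G₁, J₁)` and `(G₂, J₂)` respectively, where
the representing functions are `ε`-Lipschitz on the closed balls of radius `η` (`ε < 1`),
then `‖w₁ - w₂‖ ≤ 2(‖G₁-G₂‖_{C⁰} + ‖J₁-J₂‖_{C⁰})/(1-ε²)`. -/
theorem stmt8 {d d' : ℕ}
    (η ε : ℝ) (hη : 0 < η) (hε0 : 0 < ε) (hε1 : ε < 1)
    (G₁ G₂ : EuclideanSpace ℝ (Fin d) → EuclideanSpace ℝ (Fin d'))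
    (J₁ J₂ : EuclideanSpace ℝ (Fin d') → EuclideanSpace ℝ (Fin d))
    (hG₁ : ∀ x ∈ Metric.closedBall (0 : EuclideanSpace ℝ (Fin d)) η,
      ∀ y ∈ Metric.closedBall (0 : EuclideanSpace ℝ (Fin d)) η,
        ‖G₁ x - G₁ y‖ ≤ ε * ‖x - y‖)
    (hG₂ : ∀ x ∈ Metric.closedBall (0 : EuclideanSpace ℝ (Fin d)) η,
      ∀ y ∈ Metric.closedBall (0 : EuclideanSpace ℝ (Fin d)) η,
        ‖G₂ x - G₂ y‖ ≤ ε * ‖x - y‖)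
    (hJ₁ : ∀ x ∈ Metric.closedBall (0 : EuclideanSpace ℝ (Fin d')) η,
      ∀ y ∈ Metric.closedBall (0 : EuclideanSpace ℝ (Fin d')) η,
        ‖J₁ x - J₁ y‖ ≤ ε * ‖x - y‖)
    (hJ₂ : ∀ x ∈ Metric.closedBall (0 : EuclideanSpace ℝ (Fin d')) η,
      ∀ y ∈ Metric.closedBall (0 : EuclideanSpace ℝ (Fin d')) η,
        ‖J₂ x - J₂ y‖ ≤ ε * ‖x - y‖)
    (hmapsG₁ : Set.MapsTo G₁ (Metric.closedBall 0 η) (Metric.closedBall 0 η))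
    (hmapsG₂ : Set.MapsTo G₂ (Metric.closedBall 0 η) (Metric.closedBall 0 η))
    (hmapsJ₁ : Set.MapsTo J₁ (Metric.closedBall 0 η) (Metric.closedBall 0 η))
    (hmapsJ₂ : Set.MapsTo J₂ (Metric.closedBall 0 η) (Metric.closedBall 0 η))
    (w₁ w₂ : EuclideanSpace ℝ (Fin d) × EuclideanSpace ℝ (Fin d'))
    (hw₁ : w₁.1 ∈ Metric.closedBall 0 η ∧ w₁.2 = G₁ w₁.1 ∧
      w₁.2 ∈ Metric.closedBall 0 η ∧ w₁.1 = J₁ w₁.2)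
    (hw₂ : w₂.1 ∈ Metric.closedBall 0 η ∧ w₂.2 = G₂ w₂.1 ∧
      w₂.2 ∈ Metric.closedBall 0 η ∧ w₂.1 = J₂ w₂.2)
    (ΔG ΔJ : ℝ)
    (hΔG : ∀ x ∈ Metric.closedBall (0 : EuclideanSpace ℝ (Fin d)) η, ‖G₁ x - G₂ x‖ ≤ ΔG)
    (hΔJ : ∀ y ∈ Metric.closedBall (0 : EuclideanSpace ℝ (Fin d')) η, ‖J₁ y - J₂ y‖ ≤ ΔJ) :
    ‖w₁ - w₂‖ ≤ 2 * (ΔG + ΔJ) / (1 - ε ^ 2) := by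
  obtain ⟨hx₁, hy₁G, hy₁, hx₁J⟩ := hw₁
  obtain ⟨hx₂, hy₂G, hy₂, hx₂J⟩ := hw₂
  have h0 : (0 : EuclideanSpace ℝ (Fin d)) ∈ Metric.closedBall (0 : EuclideanSpace ℝ (Fin d)) η := by
    simp [hη.le]
  have h0' : (0 : EuclideanSpace ℝ (Fin d')) ∈ Metric.closedBall (0 : EuclideanSpace ℝ (Fin d')) η := by
    simp [hη.le]
  have hΔG0 : 0 ≤ ΔG := le_trans (norm_nonneg _) (hΔG 0 h0)
  have hΔJ0 : 0 ≤ ΔJ := le_trans (norm_nonneg _) (hΔJ 0 h0')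
  have hden : 0 < 1 - ε ^ 2 := by nlinarith
  -- bound on ‖y₁ - y₂‖ in terms of ‖x₁ - x₂‖
  have hy : ‖w₁.2 - w₂.2‖ ≤ ε * ‖w₁.1 - w₂.1‖ + ΔG := by
    have h1 : ‖G₁ w₁.1 - G₁ w₂.1‖ ≤ ε * ‖w₁.1 - w₂.1‖ := hG₁ _ hx₁ _ hx₂
    have h2 : ‖G₁ w₂.1 - G₂ w₂.1‖ ≤ ΔG := hΔG _ hx₂
    calc ‖w₁.2 - w₂.2‖ = ‖(G₁ w₁.1 - G₁ w₂.1) + (G₁ w₂.1 - G₂ w₂.1)‖ := by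
          rw [hy₁G, hy₂G]; congr 1; abel
      _ ≤ ‖G₁ w₁.1 - G₁ w₂.1‖ + ‖G₁ w₂.1 - G₂ w₂.1‖ := norm_add_le _ _
      _ ≤ ε * ‖w₁.1 - w₂.1‖ + ΔG := add_le_add h1 h2
  have hx : ‖w₁.1 - w₂.1‖ ≤ ε * ‖w₁.2 - w₂.2‖ + ΔJ := by
    have h1 : ‖J₁ w₁.2 - J₁ w₂.2‖ ≤ ε * ‖w₁.2 - w₂.2‖ := hJ₁ _ hy₁ _ hy₂
    have h2 : ‖J₁ w₂.2 - J₂ w₂.2‖ ≤ ΔJ := hΔJ _ hy₂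
    calc ‖w₁.1 - w₂.1‖ = ‖(J₁ w₁.2 - J₁ w₂.2) + (J₁ w₂.2 - J₂ w₂.2)‖ := by
          rw [hx₁J, hx₂J]; congr 1; abel
      _ ≤ ‖J₁ w₁.2 - J₁ w₂.2‖ + ‖J₁ w₂.2 - J₂ w₂.2‖ := norm_add_le _ _
      _ ≤ ε * ‖w₁.2 - w₂.2‖ + ΔJ := add_le_add h1 h2
  have hxbound : ‖w₁.1 - w₂.1‖ ≤ (ε * ΔG + ΔJ) / (1 - ε ^ 2) := by
    rw [le_div_iff₀ hden]
    nlinarith [norm_nonneg (w₁.1 - w₂.1), norm_nonneg (w₁.2 - w₂.2)]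
  rw [le_div_iff₀ hden] at hxbound
  have hybound : ‖w₁.2 - w₂.2‖ ≤ 2 * (ΔG + ΔJ) / (1 - ε ^ 2) := by
    rw [le_div_iff₀ hden]
    nlinarith [norm_nonneg (w₁.1 - w₂.1)]
  have hxbound' : ‖w₁.1 - w₂.1‖ ≤ 2 * (ΔG + ΔJ) / (1 - ε ^ 2) := by
    rw [le_div_iff₀ hden]
    nlinarith [norm_nonneg (w₁.1 - w₂.1)]
  have hnorm : ‖w₁ - w₂‖ = max ‖w₁.1 - w₂.1‖ ‖w₁.2 - w₂.2‖ := rfl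
  rw [hnorm]
  exact max_le hxbound' hybound
end

section
/- In the setting of the previous statement, assume in addition ‖h₁(v,G(v))‖ ≤ 2εp for all v ∈ B^d[p] and e^{-√ε} + 2ε < 1. Then Ψ(B^d[p]) contains the ball B^d[e^{χ-√ε}p]: for every ṽ with ‖ṽ‖ ≤ e^{χ-√ε}p, the map T(v) = D₁^{-1}(ṽ - h₁(v,G(v))) maps B^d[p] into itself, is a contraction with Lip(T) ≤ 2ε², and its unique fixed point v satisfies Ψ(v) = ṽ. -/
set_option maxHeartbeats 2000000 in
/-- Surjectivity of `Ψ(v) = D₁ v + h₁(v, G v)` onto the ball of radius `e^{χ-√ε} p`: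
for `‖u‖ ≤ e^{χ-√ε} p`, the map `T(v) = D₁⁻¹(u - h₁(v, G v))` maps `B^d[p]` into itself,
is a contraction with Lipschitz constant `≤ 2ε²`, and its unique fixed point `v`
satisfies `Ψ(v) = u`. -/
theorem stmt10 {d d' : ℕ}
    (p χ ε : ℝ) (hp : 0 < p) (hχ : 0 < χ) (hε : 0 ≤ ε)
    (hsmall : ε ^ 2 * (1 + ε) < Real.exp χ)
    (hsmall2 : Real.exp (-Real.sqrt ε) + 2 * ε < 1)
    (D₁ : EuclideanSpace ℝ (Fin d) ≃L[ℝ] EuclideanSpace ℝ (Fin d))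
    (hD₁ : ‖(D₁.symm : EuclideanSpace ℝ (Fin d) →L[ℝ] EuclideanSpace ℝ (Fin d))‖
      < Real.exp (-χ))
    (G : EuclideanSpace ℝ (Fin d) → EuclideanSpace ℝ (Fin d'))
    (hG : ∀ x ∈ Metric.closedBall (0 : EuclideanSpace ℝ (Fin d)) p,
      ∀ y ∈ Metric.closedBall (0 : EuclideanSpace ℝ (Fin d)) p,
        ‖G x - G y‖ ≤ ε * ‖x - y‖)
    (h₁ : EuclideanSpace ℝ (Fin d) × EuclideanSpace ℝ (Fin d') → EuclideanSpace ℝ (Fin d))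
    (hh₁ : ∀ x ∈ Metric.closedBall (0 : EuclideanSpace ℝ (Fin d)) p,
      ∀ y ∈ Metric.closedBall (0 : EuclideanSpace ℝ (Fin d)) p,
        ‖h₁ (x, G x) - h₁ (y, G y)‖
          ≤ ε ^ 2 * ‖((x, G x) : EuclideanSpace ℝ (Fin d) × EuclideanSpace ℝ (Fin d'))
              - (y, G y)‖)
    (hh₁bd : ∀ v ∈ Metric.closedBall (0 : EuclideanSpace ℝ (Fin d)) p,
      ‖h₁ (v, G v)‖ ≤ 2 * ε * p) :
    ∀ u : EuclideanSpace ℝ (Fin d), ‖u‖ ≤ Real.exp (χ - Real.sqrt ε) * p →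
      Set.MapsTo (fun v => D₁.symm (u - h₁ (v, G v)))
        (Metric.closedBall 0 p) (Metric.closedBall 0 p) ∧
      (∀ v₁ ∈ Metric.closedBall (0 : EuclideanSpace ℝ (Fin d)) p,
        ∀ v₂ ∈ Metric.closedBall (0 : EuclideanSpace ℝ (Fin d)) p,
          ‖D₁.symm (u - h₁ (v₁, G v₁)) - D₁.symm (u - h₁ (v₂, G v₂))‖
            ≤ 2 * ε ^ 2 * ‖v₁ - v₂‖) ∧
      (∃ v ∈ Metric.closedBall (0 : EuclideanSpace ℝ (Fin d)) p,
        D₁.symm (u - h₁ (v, G v)) = v ∧ D₁ v + h₁ (v, G v) = u ∧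
        ∀ v' ∈ Metric.closedBall (0 : EuclideanSpace ℝ (Fin d)) p,
          D₁.symm (u - h₁ (v', G v')) = v' → v' = v) := by

  intro u hu
  have hεhalf : ε < 1/2 := by
    have := Real.exp_pos (-Real.sqrt ε)
    linarith
  have hexpχ : Real.exp (-χ) < 1 := by
    rw [Real.exp_lt_one_iff]; linarith
  have hDnn : 0 ≤ ‖(D₁.symm : EuclideanSpace ℝ (Fin d) →L[ℝ] EuclideanSpace ℝ (Fin d))‖ :=
    norm_nonneg _
  set A := ‖(D₁.symm : EuclideanSpace ℝ (Fin d) →L[ℝ] EuclideanSpace ℝ (Fin d))‖ with hA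
  -- maps to
  have hmaps : Set.MapsTo (fun v => D₁.symm (u - h₁ (v, G v)))
      (Metric.closedBall (0 : EuclideanSpace ℝ (Fin d)) p) (Metric.closedBall 0 p) := by
    intro v hv
    simp only [Metric.mem_closedBall, dist_zero_right] at hv ⊢
    have h1 : ‖D₁.symm (u - h₁ (v, G v))‖ ≤ A * ‖u - h₁ (v, G v)‖ :=
      (D₁.symm : EuclideanSpace ℝ (Fin d) →L[ℝ] EuclideanSpace ℝ (Fin d)).le_opNorm _
    have h2 : ‖u - h₁ (v, G v)‖ ≤ Real.exp (χ - Real.sqrt ε) * p + 2 * ε * p := by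
      calc ‖u - h₁ (v, G v)‖ ≤ ‖u‖ + ‖h₁ (v, G v)‖ := norm_sub_le _ _
        _ ≤ Real.exp (χ - Real.sqrt ε) * p + 2 * ε * p := by
            have := hh₁bd v (by simpa using hv)
            linarith
    have key : Real.exp (-χ) * Real.exp (χ - Real.sqrt ε) = Real.exp (-Real.sqrt ε) := by
      rw [← Real.exp_add]; ring_nf
    have h3 : A * ‖u - h₁ (v, G v)‖ ≤ Real.exp (-χ) * (Real.exp (χ - Real.sqrt ε) * p + 2 * ε * p) := by
      have hnn : (0:ℝ) ≤ Real.exp (χ - Real.sqrt ε) * p + 2 * ε * p := by positivity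
      have := mul_le_mul (le_of_lt hD₁) h2 (norm_nonneg _) (le_of_lt (Real.exp_pos _))
      nlinarith [norm_nonneg (u - h₁ (v, G v))]
    have h4 : Real.exp (-χ) * (Real.exp (χ - Real.sqrt ε) * p + 2 * ε * p) ≤ p := by
      have e1 : Real.exp (-χ) * (Real.exp (χ - Real.sqrt ε) * p) = Real.exp (-Real.sqrt ε) * p := by
        rw [← mul_assoc, key]
      have e2 : Real.exp (-χ) * (2 * ε * p) ≤ 2 * ε * p := by
        have : (0:ℝ) ≤ 2 * ε * p := by positivity
        nlinarith
      nlinarith [Real.exp_pos (-Real.sqrt ε)]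
    linarith
  -- contraction
  have hlip : ∀ v₁ ∈ Metric.closedBall (0 : EuclideanSpace ℝ (Fin d)) p,
      ∀ v₂ ∈ Metric.closedBall (0 : EuclideanSpace ℝ (Fin d)) p,
        ‖D₁.symm (u - h₁ (v₁, G v₁)) - D₁.symm (u - h₁ (v₂, G v₂))‖
          ≤ 2 * ε ^ 2 * ‖v₁ - v₂‖ := by
    intro v₁ hv₁ v₂ hv₂
    have heq : D₁.symm (u - h₁ (v₁, G v₁)) - D₁.symm (u - h₁ (v₂, G v₂))
        = D₁.symm (h₁ (v₂, G v₂) - h₁ (v₁, G v₁)) := by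
      rw [← map_sub]; congr 1; abel
    rw [heq]
    have h1 : ‖D₁.symm (h₁ (v₂, G v₂) - h₁ (v₁, G v₁))‖
        ≤ A * ‖h₁ (v₂, G v₂) - h₁ (v₁, G v₁)‖ :=
      (D₁.symm : EuclideanSpace ℝ (Fin d) →L[ℝ] EuclideanSpace ℝ (Fin d)).le_opNorm _
    have h2 := hh₁ v₂ hv₂ v₁ hv₁
    have hprod : ‖((v₂, G v₂) : EuclideanSpace ℝ (Fin d) × EuclideanSpace ℝ (Fin d'))
        - (v₁, G v₁)‖ ≤ ‖v₂ - v₁‖ := by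
      rw [Prod.mk_sub_mk, Prod.norm_def]
      apply max_le (le_of_eq rfl)
      have := hG v₂ hv₂ v₁ hv₁
      nlinarith [norm_nonneg (v₂ - v₁)]
    have hA1 : A ≤ 1 := le_trans (le_of_lt hD₁) (le_of_lt hexpχ)
    have h3 : ‖h₁ (v₂, G v₂) - h₁ (v₁, G v₁)‖ ≤ ε ^ 2 * ‖v₂ - v₁‖ := by
      calc ‖h₁ (v₂, G v₂) - h₁ (v₁, G v₁)‖ ≤ ε ^ 2 * ‖((v₂, G v₂) : EuclideanSpace ℝ (Fin d) × EuclideanSpace ℝ (Fin d')) - (v₁, G v₁)‖ := h2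
        _ ≤ ε ^ 2 * ‖v₂ - v₁‖ := by nlinarith
    have hnormsymm : ‖v₂ - v₁‖ = ‖v₁ - v₂‖ := norm_sub_rev _ _
    nlinarith [norm_nonneg (h₁ (v₂, G v₂) - h₁ (v₁, G v₁)), norm_nonneg (v₂ - v₁)]
  refine ⟨hmaps, hlip, ?_⟩
  -- fixed point via Banach
  have h2ε2 : 2 * ε ^ 2 < 1 := by nlinarith
  have h2ε2nn : (0:ℝ) ≤ 2 * ε ^ 2 := by positivity
  set S := Metric.closedBall (0 : EuclideanSpace ℝ (Fin d)) p with hS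
  haveI : Nonempty S := ⟨⟨0, by simp [hS, le_of_lt hp]⟩⟩
  haveI : CompleteSpace S := (Metric.isClosed_closedBall : IsClosed S).completeSpace_coe
  set f : S → S := fun v => ⟨D₁.symm (u - h₁ ((v : EuclideanSpace ℝ (Fin d)), G v)),
    hmaps v.2⟩ with hf
  have hlipf : LipschitzWith ⟨2 * ε ^ 2, h2ε2nn⟩ f := by
    apply LipschitzWith.of_dist_le_mul
    intro a b
    have := hlip a a.2 b b.2
    simp only [hf, Subtype.dist_eq, dist_eq_norm]
    exact this
  have hcontr : ContractingWith ⟨2 * ε ^ 2, h2ε2nn⟩ f := by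
    constructor
    · exact_mod_cast h2ε2
    · exact hlipf
  obtain ⟨v, hvfix, -⟩ := hcontr.exists_fixedPoint
    (⟨0, by simp [hS, le_of_lt hp]⟩ : S) (edist_ne_top _ _)
  have hvfix' : f v = v := hvfix
  refine ⟨v, v.2, ?_, ?_, ?_⟩
  · exact congrArg Subtype.val hvfix'
  · have hval : D₁.symm (u - h₁ ((v : EuclideanSpace ℝ (Fin d)), G v)) = (v : EuclideanSpace ℝ (Fin d)) :=
      congrArg Subtype.val hvfix'
    have := congrArg D₁ hval
    rw [D₁.apply_symm_apply] at this
    rw [← this]; abel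
  · intro v' hv' hfixv'
    have hval : D₁.symm (u - h₁ ((v : EuclideanSpace ℝ (Fin d)), G v)) = (v : EuclideanSpace ℝ (Fin d)) :=
      congrArg Subtype.val hvfix'
    by_contra hne
    have hpos : 0 < ‖v' - (v : EuclideanSpace ℝ (Fin d))‖ := by
      rw [norm_pos_iff, sub_ne_zero]; exact hne
    have := hlip v' hv' v v.2
    rw [hfixv', hval] at this
    nlinarith
end

section
/- (Graph transform C⁰ contraction) Under the graph transform assumptions — ‖D₁^{-1}‖ < e^{-χ}, ‖D₂‖ < e^{-χ}, and the perturbation bounds ‖dΔ₁‖_{C^0} < 2ε, ‖Φ₁-Φ₂‖_{C^0} ≤ ε²‖G₁-G₂‖_{C^0}, ‖Δ₁-Δ₂‖_{C^0} ≤ (e^{-χ}+ε²)‖G₁-G₂‖_{C^0} — the transformed representing functions G̃ᵢ = Δᵢ∘Φᵢ satisfy ‖G̃₁-G̃₂‖_{C^0} ≤ (e^{-χ}+3ε²)‖G₁-G₂‖_{C^0}. In particular, if e^{-χ}+3ε² ≤ e^{-χ/2}, the graph transform contracts C⁰ distance by the factor e^{-χ/2}. -/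
/-- `C⁰` contraction of the graph transform: under the perturbation bounds
`Lip(Δ₁) ≤ 2ε`, `‖Φ₁-Φ₂‖_{C⁰} ≤ ε² C`, `‖Δ₁-Δ₂‖_{C⁰} ≤ (e^{-χ}+ε²) C`
(with `C = ‖G₁-G₂‖_{C⁰}`), the transformed representing functions `G̃ᵢ = Δᵢ∘Φᵢ` satisfy
`‖G̃₁-G̃₂‖_{C⁰} ≤ (e^{-χ}+3ε²) C`; in particular if `e^{-χ}+3ε² ≤ e^{-χ/2}` the graph
transform contracts the `C⁰` distance by the factor `e^{-χ/2}`. -/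
theorem stmt13 {E E' F : Type*} [NormedAddCommGroup E] [NormedAddCommGroup E']
    [NormedAddCommGroup F]
    (χ ε C : ℝ) (hε0 : 0 ≤ ε) (hε1 : ε ≤ 1) (hC : 0 ≤ C)
    (S : Set E) (S' : Set E')
    (Δ₁ Δ₂ : E → F) (Φ₁ Φ₂ : E' → E)
    (hΦ₁ : Set.MapsTo Φ₁ S' S) (hΦ₂ : Set.MapsTo Φ₂ S' S)
    (hΔ₁lip : ∀ x ∈ S, ∀ y ∈ S, ‖Δ₁ x - Δ₁ y‖ ≤ 2 * ε * ‖x - y‖)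
    (hΦdiff : ∀ x ∈ S', ‖Φ₁ x - Φ₂ x‖ ≤ ε ^ 2 * C)
    (hΔdiff : ∀ v ∈ S, ‖Δ₁ v - Δ₂ v‖ ≤ (Real.exp (-χ) + ε ^ 2) * C) :
    (∀ x ∈ S', ‖Δ₁ (Φ₁ x) - Δ₂ (Φ₂ x)‖ ≤ (Real.exp (-χ) + 3 * ε ^ 2) * C) ∧
    (Real.exp (-χ) + 3 * ε ^ 2 ≤ Real.exp (-χ / 2) →
      ∀ x ∈ S', ‖Δ₁ (Φ₁ x) - Δ₂ (Φ₂ x)‖ ≤ Real.exp (-χ / 2) * C) := by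
  have key : ∀ x ∈ S', ‖Δ₁ (Φ₁ x) - Δ₂ (Φ₂ x)‖ ≤ (Real.exp (-χ) + 3 * ε ^ 2) * C := by
    intro x hx
    have h1 : ‖Δ₁ (Φ₁ x) - Δ₁ (Φ₂ x)‖ ≤ 2 * ε * (ε ^ 2 * C) := by
      calc ‖Δ₁ (Φ₁ x) - Δ₁ (Φ₂ x)‖ ≤ 2 * ε * ‖Φ₁ x - Φ₂ x‖ :=
            hΔ₁lip _ (hΦ₁ hx) _ (hΦ₂ hx)
        _ ≤ 2 * ε * (ε ^ 2 * C) := by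
            apply mul_le_mul_of_nonneg_left (hΦdiff x hx); positivity
    have h2 : ‖Δ₁ (Φ₂ x) - Δ₂ (Φ₂ x)‖ ≤ (Real.exp (-χ) + ε ^ 2) * C :=
      hΔdiff _ (hΦ₂ hx)
    have h3 : ‖Δ₁ (Φ₁ x) - Δ₂ (Φ₂ x)‖ ≤
        2 * ε * (ε ^ 2 * C) + (Real.exp (-χ) + ε ^ 2) * C := by
      calc ‖Δ₁ (Φ₁ x) - Δ₂ (Φ₂ x)‖
          ≤ ‖Δ₁ (Φ₁ x) - Δ₁ (Φ₂ x)‖ + ‖Δ₁ (Φ₂ x) - Δ₂ (Φ₂ x)‖ := norm_sub_le_norm_sub_add_norm_sub _ _ _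
        _ ≤ _ := add_le_add h1 h2
    have hεε : 2 * ε * (ε ^ 2 * C) ≤ 2 * (ε ^ 2 * C) := by nlinarith [mul_nonneg (mul_nonneg (sq_nonneg ε) hC) (by linarith : (0:ℝ) ≤ 1 - ε)]
    nlinarith
  refine ⟨key, fun h x hx => le_trans (key x hx) ?_⟩
  exact mul_le_mul_of_nonneg_right h hC
end
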